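/- Let L ∈ T. Then Z(L_c) equals the radical of the form restricted to L_c × L_c, and the orthogonal complement L_c^⊥ = {x ∈ L : (x, L_c) = 0} equals the centralizer C_L(L_c). -/

import Mathlib

open scoped Classical

namespace Gen

variable (F L : Type*) [Field F] [CharZero F] [LieRing L] [LieAlgebra F L]

/-- The weight space of a linear functional `α` on a subalgebra `H`. -/
def wt (H : LieSubalgebra F L) (α : Module.Dual F H) : Submodule F L where
  carrier := {x : L | ∀ h : H, ⁅(h : L), x⁆ = α h • x}
  add_mem' := by
    intro a b ha hb h
    rw [lie_add, ha h, hb h, smul_add]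
  zero_mem' := by intro h; simp
  smul_mem' := by
    intro c x hx h
    rw [lie_smul, hx h, smul_comm]

/-- Data for axioms (T1) and (T2): a non-degenerate symmetric invariant bilinear form,
a finite dimensional split toral subalgebra `H` on which the form is non-degenerate,
together with the representatives `t_α ∈ H` of linear functionals on `H`. -/
structure TData where
  B : L →ₗ[F] L →ₗ[F] F
  bsymm : ∀ x y, B x y = B y x
  binv : ∀ x y z, B ⁅x, y⁆ z = B x ⁅y, z⁆
  bnondeg : ∀ x, (∀ y, B x y = 0) → x = 0
  H : LieSubalgebra F L
  hne : H ≠ ⊥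
  hfin : FiniteDimensional F H
  hnondeg : ∀ h : H, (∀ h' : H, B h h' = 0) → h = 0
  decomp : DirectSum.IsInternal (wt F L H)
  t : Module.Dual F H → H
  tspec : ∀ (α : Module.Dual F H) (h : H), B (t α) h = α h

variable {F L}

namespace TData

variable (T : TData F L)

/-- The form transferred to the dual of `H`: `(α, β) = (t_α, t_β)`. -/
def pr (α β : Module.Dual F T.H) : F := T.B (T.t α) (T.t β)

/-- The root system `R = {α : L_α ≠ 0}`. -/
def R : Set (Module.Dual F T.H) := {α | wt F L T.H α ≠ ⊥}

/-- Non-isotropic roots. -/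
def Rx : Set (Module.Dual F T.H) := {α | α ∈ T.R ∧ T.pr α α ≠ 0}

/-- Isotropic roots. -/
def R0 : Set (Module.Dual F T.H) := {α | α ∈ T.R ∧ T.pr α α = 0}

/-- The core: the subalgebra generated by the non-isotropic root spaces. -/
def core : LieSubalgebra F L :=
  LieSubalgebra.lieSpan F L (⋃ α ∈ T.Rx, (wt F L T.H α : Set L))

end TData

variable (F L)

/-- A Lie algebra in the class 𝒯: axioms (T1)–(T6). -/
structure TAlg extends TData F L where
  t3a : ∀ δ ∈ toTData.R0, ∃ x ∈ wt F L toTData.H δ, ∃ y ∈ wt F L toTData.H (-δ),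
          ⁅x, y⁆ = (toTData.t δ : L)
  t3b : ∀ α ∈ toTData.Rx, ∀ x ∈ wt F L toTData.H α, x ≠ 0 →
          ∃ y ∈ wt F L toTData.H (-α), ⁅x, y⁆ = (toTData.t α : L)
  t4 : ∀ α ∈ toTData.Rx, ∀ x ∈ wt F L toTData.H α, ∀ y : L,
          ∃ n : ℕ, ((LieAlgebra.ad F L x) ^ n) y = 0
  t5a : ∀ S1 S2 : Set (Module.Dual F toTData.H), S1.Nonempty → S2.Nonempty →
          S1 ∪ S2 = toTData.Rx → Disjoint S1 S2 →
          ∃ a ∈ S1, ∃ b ∈ S2, toTData.pr a b ≠ 0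
  t5b : ∀ δ ∈ toTData.R0, ∃ α ∈ toTData.Rx, α + δ ∈ toTData.R
  t6free : Module.Free ℤ (AddSubgroup.closure toTData.R0)
  t6fin : Module.Finite ℤ (AddSubgroup.closure toTData.R0)

end Gen

/-!
An element `z` centralizing `L_c` is orthogonal to it: for a root vector `x ∈ L_α` with
`(α, α) ≠ 0`, invariance gives `(α, α) (z, x) = (z, [t_α, x]) = -([z, x], t_α) = 0`, and
`(z, [a, b]) = ([z, a], b)`. Conversely, if `z ⊥ L_c` then `([z, y], w) = (z, [y, w]) = 0` for
`y ∈ L_c`, since `L_c` is an ideal, and nondegeneracy gives `[z, y] = 0`.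

That `L_c` is an ideal comes down to `(α, β) = 0` for `α` non-isotropic and `β` isotropic, since
then `α + β` is non-isotropic whenever it is a root. If `(α, β) ≠ 0`, the sl₂-integrality of
`2 (β, γ) / (γ, γ)` for `γ = α` and `γ = α + kβ` confines the `β`-string through `α` to `|k| ≤ 2`.
So for `p ∈ L_β`, `q ∈ L_{-β}` with `[p, q] = t_β`, the operator `ad p` is nilpotent on the string
while `[ad p, ad q]` acts on it as the nonzero scalar `(α, β)`, which is impossible on a nonzero
space.
-/

namespace IsSl2Triple.HasPrimitiveVectorWith

open LieModule

variable {R L M : Type*} [CommRing R] [LieRing L] [LieAlgebra R L] [AddCommGroup M] [Module R M]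
  [LieRingModule L M] [LieModule R L M] {h e f : L} {t : IsSl2Triple h e f} {m : M} {μ : R}

lemma exists_nat_of_exists_pow_toEnd_f_eq_zero [IsDomain R] [CharZero R] [Module.IsTorsionFree R M]
    (P : t.HasPrimitiveVectorWith m μ) (hf : ∃ n, (toEnd R L M f ^ n) m = 0) :
    ∃ n : ℕ, μ = n := by
  obtain ⟨n, hn₁, hn₂⟩ := Nat.exists_not_and_succ_of_not_zero_of_exists P.ne_zero hf
  refine ⟨n, ?_⟩
  have := P.lie_e_pow_succ_toEnd_f n
  rw [hn₂, lie_zero, eq_comm, smul_eq_zero_iff_left hn₁, mul_eq_zero, sub_eq_zero] at this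
  exact this.resolve_left <| Nat.cast_add_one_ne_zero n

end IsSl2Triple.HasPrimitiveVectorWith

section CanonicalCommutation

variable {K A : Type*} [Field K] [Ring A] [Algebra K A] {p q : A} {s : K}

theorem pow_succ_mul_sub_mul_pow_succ (h : p * q - q * p = s • 1) (n : ℕ) :
    p ^ (n + 1) * q - q * p ^ (n + 1) = ((n + 1 : K) * s) • p ^ n := by
  induction n with
  | zero => simpa using h
  | succ n ih =>
    calc p ^ (n + 2) * q - q * p ^ (n + 2)
        = p * (p ^ (n + 1) * q - q * p ^ (n + 1)) + (p * q - q * p) * p ^ (n + 1) := by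
          rw [pow_succ' p (n + 1)]
          generalize p ^ (n + 1) = r
          noncomm_ring
      _ = (((n + 1 : ℕ) + 1 : K) * s) • p ^ (n + 1) := by
          rw [ih, h, mul_smul_comm, ← pow_succ', smul_one_mul, ← add_smul]
          congr 1
          push_cast
          ring

theorem not_isNilpotent_of_mul_sub_mul_eq_smul_one [CharZero K] [Nontrivial A] (hs : s ≠ 0)
    (h : p * q - q * p = s • 1) : ¬IsNilpotent p := by
  rintro ⟨N, hN⟩
  suffices ∀ n, p ^ n = 0 → (1 : A) = 0 from one_ne_zero (this N hN)
  intro n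
  induction n with
  | zero => simp
  | succ n ih =>
    intro hn
    refine ih ?_
    have hunit : IsUnit ((n + 1 : K) * s) := (mul_ne_zero (Nat.cast_add_one_ne_zero n) hs).isUnit
    rw [← hunit.smul_eq_zero, ← pow_succ_mul_sub_mul_pow_succ h, hn, zero_mul, mul_zero, sub_zero]

end CanonicalCommutation

theorem Int.natAbs_le_two_of_sub_eq_mul_mul {a b k : ℤ} (ha : a ≠ 0) (hb : b ≠ 0)
    (h : a - b = a * b * k) : k.natAbs ≤ 2 := by
  have hle : a.natAbs * b.natAbs * k.natAbs ≤ a.natAbs + b.natAbs := by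
    rw [← Int.natAbs_mul, ← Int.natAbs_mul, ← h]
    exact Int.natAbs_sub_le a b
  have ha' := Int.natAbs_pos.mpr ha
  have hb' := Int.natAbs_pos.mpr hb
  nlinarith [Nat.mul_le_mul ha' hb']

namespace LieSubalgebra

variable {R L : Type*} [CommRing R] [LieRing L] [LieAlgebra R L] {s : Set L}

lemma lie_mem_lieSpan_of_forall_lie_mem (hs : ∀ x ∈ s, ∀ y, ⁅x, y⁆ ∈ lieSpan R L s) {x : L}
    (hx : x ∈ lieSpan R L s) (y : L) : ⁅x, y⁆ ∈ lieSpan R L s := by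
  induction hx using lieSpan_induction generalizing y with
  | mem x hx => exact hs x hx y
  | zero => rw [zero_lie]; exact zero_mem _
  | add a b _ _ iha ihb => rw [add_lie]; exact add_mem (iha y) (ihb y)
  | smul c a _ iha => rw [smul_lie]; exact SMulMemClass.smul_mem c (iha y)
  | lie a b ha hb iha ihb =>
    rw [lie_lie]
    exact sub_mem (lie_mem _ ha (ihb y)) (lie_mem _ hb (iha y))

end LieSubalgebra

namespace Gen

variable {F L : Type*} [Field F] [LieRing L] [LieAlgebra F L]

section Weights

variable {H : LieSubalgebra F L} {μ ν : Module.Dual F H} {x y : L}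

lemma lie_mem_wt_add (hx : x ∈ wt F L H μ) (hy : y ∈ wt F L H ν) :
    ⁅x, y⁆ ∈ wt F L H (μ + ν) := fun h => by
  rw [leibniz_lie, hx h, hy h, smul_lie, lie_smul, ← add_smul, LinearMap.add_apply]

lemma ad_pow_mem_wt (hx : x ∈ wt F L H μ) (hy : y ∈ wt F L H ν) (n : ℕ) :
    (LieAlgebra.ad F L x ^ n) y ∈ wt F L H (ν + n • μ) := by
  induction n with
  | zero => simpa using hy
  | succ n ih =>
    rw [pow_succ', Module.End.mul_apply, LieAlgebra.ad_apply, succ_nsmul', ← add_assoc,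
      add_comm ν μ, add_assoc]
    exact lie_mem_wt_add hx ih

end Weights

namespace TData

variable (T : TData F L)

lemma pr_eq_apply (μ ν : Module.Dual F T.H) : T.pr μ ν = μ (T.t ν) := T.tspec μ (T.t ν)

lemma pr_comm (μ ν : Module.Dual F T.H) : T.pr μ ν = T.pr ν μ := T.bsymm _ _

lemma pr_add_left (μ ν κ : Module.Dual F T.H) : T.pr (μ + ν) κ = T.pr μ κ + T.pr ν κ := by
  simp only [pr_eq_apply, LinearMap.add_apply]

lemma pr_neg_left (μ κ : Module.Dual F T.H) : T.pr (-μ) κ = -T.pr μ κ := by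
  simp only [pr_eq_apply, LinearMap.neg_apply]

lemma pr_zsmul_left (k : ℤ) (μ κ : Module.Dual F T.H) : T.pr (k • μ) κ = k * T.pr μ κ := by
  simp only [pr_eq_apply, LinearMap.smul_apply, zsmul_eq_mul]

lemma pr_neg_neg (μ : Module.Dual F T.H) : T.pr (-μ) (-μ) = T.pr μ μ := by
  rw [pr_neg_left, pr_comm, pr_neg_left, neg_neg]

lemma pr_add_zsmul_self {α β : Module.Dual F T.H} (hβ : T.pr β β = 0) (k : ℤ) :
    T.pr (α + k • β) (α + k • β) = T.pr α α + 2 * k * T.pr α β := by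
  rw [pr_add_left, pr_zsmul_left, pr_comm T α, pr_comm T β, pr_add_left, pr_add_left,
    pr_zsmul_left, pr_zsmul_left, hβ, pr_comm T β α]
  ring

lemma coe_t_ne_zero {γ : Module.Dual F T.H} (hγ : T.pr γ γ ≠ 0) : (T.t γ : L) ≠ 0 := by
  intro h
  exact hγ (by rw [pr, h, map_zero])

lemma lie_t_of_mem_wt {μ ν : Module.Dual F T.H} {y : L} (hy : y ∈ wt F L T.H ν) :
    ⁅(T.t μ : L), y⁆ = T.pr ν μ • y := by
  rw [hy (T.t μ), pr_eq_apply]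

lemma wt_le_core {α : Module.Dual F T.H} (hα : α ∈ T.Rx) : wt F L T.H α ≤ T.core :=
  fun _ hx => LieSubalgebra.subset_lieSpan (Set.mem_biUnion hα hx)

def rootString (α β : Module.Dual F T.H) : Submodule F L := ⨆ k : ℤ, wt F L T.H (α + k • β)

variable {α β : Module.Dual F T.H}

lemma wt_le_rootString (k : ℤ) : wt F L T.H (α + k • β) ≤ T.rootString α β :=
  le_iSup (fun k : ℤ => wt F L T.H (α + k • β)) k

lemma rootString_le_comap_ad {j : ℤ} {x : L} (hx : x ∈ wt F L T.H (j • β)) :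
    T.rootString α β ≤ (T.rootString α β).comap (LieAlgebra.ad F L x) :=
  iSup_le fun k y hy => by
    have hxy := lie_mem_wt_add hx hy
    rw [show j • β + (α + k • β) = α + (k + j) • β by rw [add_smul]; abel] at hxy
    exact T.wt_le_rootString _ hxy

lemma rootString_le_eigenspace_t (hβ : T.pr β β = 0) :
    T.rootString α β ≤ (LieAlgebra.ad F L (T.t β)).eigenspace (T.pr α β) :=
  iSup_le fun k y hy => by
    rw [Module.End.mem_eigenspace_iff, LieAlgebra.ad_apply, T.lie_t_of_mem_wt hy, pr_add_left,
      pr_zsmul_left, hβ, mul_zero, add_zero]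

end TData

namespace TAlg

variable (T : TAlg F L)

theorem B_eq_zero_of_forall_lie_eq_zero {z : L} (hz : ∀ y ∈ T.core, ⁅z, y⁆ = 0) {y : L}
    (hy : y ∈ T.core) : T.B z y = 0 := by
  induction hy using LieSubalgebra.lieSpan_induction with
  | mem y hy =>
    obtain ⟨α, hα, hyα⟩ := Set.mem_iUnion₂.mp hy
    have hty : T.pr α α • T.B z y = -T.B ⁅z, y⁆ (T.t α) := by
      rw [← map_smul, ← T.lie_t_of_mem_wt hyα, ← lie_skew, map_neg, T.binv]
    rw [hz y (T.wt_le_core hα hyα), map_zero, LinearMap.zero_apply, neg_zero] at hty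
    exact (smul_eq_zero.mp hty).resolve_left hα.2
  | zero => exact map_zero _
  | add a b _ _ ha hb => rw [map_add, ha, hb, add_zero]
  | smul c a _ ha => rw [map_smul, ha, smul_zero]
  | lie a b ha _ _ _ => rw [← T.binv, hz a ha, map_zero, LinearMap.zero_apply]

variable [CharZero F] {α β γ μ : Module.Dual F T.H}

lemma exists_isSl2Triple (hγ : γ ∈ T.Rx) {e : L} (he : e ∈ wt F L T.H γ) (he0 : e ≠ 0) :
    ∃ f ∈ wt F L T.H (-γ), IsSl2Triple ((2 / T.pr γ γ) • (T.t γ : L)) e f := by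
  obtain ⟨f, hf, hef⟩ := T.t3b γ hγ e he he0
  have hc : 2 / T.pr γ γ * T.pr γ γ = 2 := div_mul_cancel₀ 2 hγ.2
  refine ⟨(2 / T.pr γ γ) • f, Submodule.smul_mem _ _ hf, ?_, ?_, ?_, ?_⟩
  · exact smul_ne_zero (div_ne_zero two_ne_zero hγ.2) (T.coe_t_ne_zero hγ.2)
  · rw [lie_smul, hef]
  · rw [smul_lie, T.lie_t_of_mem_wt he, smul_smul, hc, ofNat_smul_eq_nsmul]
  · rw [smul_lie, lie_smul, T.lie_t_of_mem_wt hf, T.pr_neg_left, ← ofNat_smul_eq_nsmul (R := F)]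
    match_scalars
    field_simp [hγ.2]

lemma neg_mem_Rx (hγ : γ ∈ T.Rx) : -γ ∈ T.Rx := by
  obtain ⟨e, he, he0⟩ := (Submodule.ne_bot_iff _).mp hγ.1
  obtain ⟨f, hf, ht⟩ := T.exists_isSl2Triple hγ he he0
  exact ⟨(Submodule.ne_bot_iff _).mpr ⟨f, hf, ht.f_ne_zero⟩, by rw [T.pr_neg_neg]; exact hγ.2⟩

lemma exists_int_two_mul_pr_eq (hγ : γ ∈ T.Rx) (hμ : μ ∈ T.R) :
    ∃ m : ℤ, 2 * T.pr μ γ = m * T.pr γ γ := by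
  obtain ⟨e, he, he0⟩ := (Submodule.ne_bot_iff _).mp hγ.1
  obtain ⟨f, hf, ht⟩ := T.exists_isSl2Triple hγ he he0
  obtain ⟨v, hv, hv0⟩ := (Submodule.ne_bot_iff _).mp hμ
  -- the top `(ad e)^j v` of the `e`-string through `v` is a primitive vector
  obtain ⟨j, hw0, hew⟩ :=
    Nat.exists_not_and_succ_of_not_zero_of_exists hv0 (T.t4 γ hγ e he v)
  have hw := ad_pow_mem_wt he hv j
  have P : ht.HasPrimitiveVectorWith ((LieAlgebra.ad F L e ^ j) v)
      (2 / T.pr γ γ * T.pr (μ + j • γ) γ) :=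
    { ne_zero := hw0
      lie_h := by rw [smul_lie, T.lie_t_of_mem_wt hw, smul_smul]
      lie_e := by rwa [pow_succ', Module.End.mul_apply] at hew }
  obtain ⟨n, hn⟩ := P.exists_nat_of_exists_pow_toEnd_f_eq_zero
    (T.t4 (-γ) (T.neg_mem_Rx hγ) f hf _)
  refine ⟨n - 2 * j, ?_⟩
  rw [← natCast_zsmul, T.pr_add_left, T.pr_zsmul_left] at hn
  field_simp [hγ.2] at hn
  push_cast at hn ⊢
  linear_combination hn

lemma natAbs_le_two_of_add_zsmul_mem_R (hα : α ∈ T.Rx) (hβ : β ∈ T.R0) (hs : T.pr α β ≠ 0)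
    {k : ℤ} (hk : α + k • β ∈ T.R) : k.natAbs ≤ 2 := by
  obtain ⟨m₀, hm₀⟩ := T.exists_int_two_mul_pr_eq hα hβ.1
  rw [T.pr_comm] at hm₀
  have hm₀0 : m₀ ≠ 0 := by
    rintro rfl
    exact hs (by simpa using hm₀)
  have hnorm := T.pr_add_zsmul_self hβ.2 (α := α) k
  by_cases hiso : T.pr (α + k • β) (α + k • β) = 0
  · have hunit : ((-m₀ * k : ℤ) : F) = 1 := by
      apply mul_right_cancel₀ (mul_ne_zero two_ne_zero hs)
      push_cast
      linear_combination (-(m₀ : F)) * (hnorm.symm.trans hiso) - hm₀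
    rcases Int.eq_one_or_neg_one_of_mul_eq_one' (Int.cast_eq_one.mp hunit) with ⟨-, rfl⟩ | ⟨-, rfl⟩
      <;> decide
  · obtain ⟨mk, hmk⟩ := T.exists_int_two_mul_pr_eq ⟨hk, hiso⟩ hβ.1
    rw [T.pr_comm, T.pr_add_left, T.pr_zsmul_left, hβ.2, mul_zero, add_zero, hnorm] at hmk
    have hmk0 : mk ≠ 0 := by
      rintro rfl
      exact hs (by simpa using hmk)
    refine Int.natAbs_le_two_of_sub_eq_mul_mul hm₀0 hmk0 (Int.cast_injective (α := F) ?_)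
    apply mul_right_cancel₀ (mul_ne_zero two_ne_zero hs)
    push_cast
    linear_combination (m₀ : F) * hmk - (mk : F) * hm₀

lemma rootString_le_ker_ad_pow (hα : α ∈ T.Rx) (hβ : β ∈ T.R0) (hs : T.pr α β ≠ 0) {p : L}
    (hp : p ∈ wt F L T.H β) : T.rootString α β ≤ LinearMap.ker (LieAlgebra.ad F L p ^ 7) :=
  iSup_le fun k y hy => by
    by_cases hk : α + k • β ∈ T.R
    · have hk7 : wt F L T.H (α + (k + 7) • β) = ⊥ := by
        by_contra hk7
        have := T.natAbs_le_two_of_add_zsmul_mem_R hα hβ hs hk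
        have := T.natAbs_le_two_of_add_zsmul_mem_R hα hβ hs hk7
        omega
      have hpy := ad_pow_mem_wt hp hy 7
      rw [← natCast_zsmul, add_assoc, ← add_smul, Nat.cast_ofNat, hk7] at hpy
      exact hpy
    · rw [not_not.mp hk] at hy
      rw [(Submodule.mem_bot F).mp hy]
      exact zero_mem _

theorem pr_eq_zero_of_mem_Rx_of_mem_R0 (hα : α ∈ T.Rx) (hβ : β ∈ T.R0) : T.pr α β = 0 := by
  by_contra hs
  obtain ⟨p, hp, q, hq, hpq⟩ := T.t3a β hβ
  have hpM := T.rootString_le_comap_ad (α := α) (β := β) (j := 1) (by rwa [one_smul])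
  have hqM := T.rootString_le_comap_ad (α := α) (β := β) (j := -1) (by rwa [neg_one_zsmul])
  have hM : T.rootString α β ≠ ⊥ := by
    obtain ⟨e, he, he0⟩ := (Submodule.ne_bot_iff _).mp hα.1
    exact (Submodule.ne_bot_iff _).mpr ⟨e, T.wt_le_rootString 0 (by rwa [zero_smul, add_zero]), he0⟩
  have : Nontrivial (T.rootString α β) := Submodule.nontrivial_iff_ne_bot.mpr hM
  refine not_isNilpotent_of_mul_sub_mul_eq_smul_one
    (p := (LieAlgebra.ad F L p).restrict (q := T.rootString α β) fun _ hx => hpM hx)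
    (q := (LieAlgebra.ad F L q).restrict (q := T.rootString α β) fun _ hx => hqM hx) hs ?_ ⟨7, ?_⟩
  · ext ⟨u, hu⟩
    have := T.rootString_le_eigenspace_t hβ.2 hu
    rw [Module.End.mem_eigenspace_iff, ← hpq, LieAlgebra.ad_apply, lie_lie] at this
    simpa using this
  · ext ⟨u, hu⟩
    rw [Module.End.pow_restrict]
    simpa using T.rootString_le_ker_ad_pow hα hβ hs hp hu

lemma lie_mem_core_of_mem_wt {ν : Module.Dual F T.H} (hα : α ∈ T.Rx) {x y : L}
    (hx : x ∈ wt F L T.H α) (hy : y ∈ wt F L T.H ν) : ⁅x, y⁆ ∈ T.core := by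
  by_cases hν : ν ∈ T.R
  swap
  · rw [not_not.mp hν, Submodule.mem_bot] at hy
    rw [hy, lie_zero]
    exact zero_mem _
  by_cases hνν : T.pr ν ν = 0
  swap
  · exact T.core.lie_mem (T.wt_le_core hα hx) (T.wt_le_core ⟨hν, hνν⟩ hy)
  by_cases hαν : α + ν ∈ T.R
  · have hnorm := T.pr_add_zsmul_self hνν (α := α) 1
    rw [one_zsmul, T.pr_eq_zero_of_mem_Rx_of_mem_R0 hα ⟨hν, hνν⟩, mul_zero, add_zero] at hnorm
    exact T.wt_le_core ⟨hαν, hnorm ▸ hα.2⟩ (lie_mem_wt_add hx hy)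
  · have hxy := lie_mem_wt_add hx hy
    rw [not_not.mp hαν, Submodule.mem_bot] at hxy
    rw [hxy]
    exact zero_mem _

theorem lie_mem_core {x : L} (hx : x ∈ T.core) (y : L) : ⁅x, y⁆ ∈ T.core := by
  refine LieSubalgebra.lie_mem_lieSpan_of_forall_lie_mem (fun z hz y => ?_) hx y
  obtain ⟨α, hα, hzα⟩ := Set.mem_iUnion₂.mp hz
  have hle : ⨆ ν, wt F L T.H ν ≤ T.core.toSubmodule.comap (LieAlgebra.ad F L z) :=
    iSup_le fun ν _ hw => T.lie_mem_core_of_mem_wt hα hzα hw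
  exact hle (T.decomp.submodule_iSup_eq_top.symm ▸ Submodule.mem_top)

theorem lie_eq_zero_of_forall_B_eq_zero {z : L} (hz : ∀ y ∈ T.core, T.B z y = 0) {y : L}
    (hy : y ∈ T.core) : ⁅z, y⁆ = 0 :=
  T.bnondeg _ fun w => by rw [T.binv]; exact hz _ (T.lie_mem_core hy w)

end TAlg
end Gen

/-- For `L ∈ 𝒯`, `Z(L_c)` equals the radical of the form restricted to
`L_c`, and `L_c^⊥ = C_L(L_c)`. -/
theorem center_core_eq_radical_and_perp_eq_centralizer
    (F L : Type*) [Field F] [CharZero F] [LieRing L] [LieAlgebra F L]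
    (T : Gen.TAlg F L) :
    ({z : L | z ∈ T.toTData.core ∧ ∀ x ∈ T.toTData.core, ⁅z, x⁆ = 0}
      = {z : L | z ∈ T.toTData.core ∧ ∀ x ∈ T.toTData.core, T.toTData.B z x = 0}) ∧
    ({x : L | ∀ y ∈ T.toTData.core, T.toTData.B x y = 0}
      = {x : L | ∀ y ∈ T.toTData.core, ⁅x, y⁆ = 0}) := by
  have perp_iff_centralizes (z : L) :
      (∀ y ∈ T.core, T.B z y = 0) ↔ ∀ y ∈ T.core, ⁅z, y⁆ = 0 :=
    ⟨fun h _ => T.lie_eq_zero_of_forall_B_eq_zero h, fun h _ => T.B_eq_zero_of_forall_lie_eq_zero h⟩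
  exact ⟨Set.ext fun z => and_congr_right fun _ => (perp_iff_centralizes z).symm,
    Set.ext perp_iff_centralizes⟩
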